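/- arXiv:1211.4239 — 3 statements merged into one kernel-verified Lean document; each statement's English description precedes it below -/
import Mathlib

section
/- Let B be a commutative ℂ-algebra equipped with an anti-linear involution * (conjugate-linear ring involution), and let χ : B → ℂ be a ℂ-algebra homomorphism. If χ(1 + Σ_j a_j a_j*) ≠ 0 for every finite family {a_j} of elements of B, then χ(x*) = conj(χ(x)) for all x ∈ B. -/
/-- Let `B` be a commutative `ℂ`-algebra with a conjugate-linear ring involution `star`,
and `χ : B → ℂ` a `ℂ`-algebra homomorphism.  If `χ(1 + Σ_j a_j a_j*) ≠ 0` for every finite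
family `{a_j}` of elements of `B`, then `χ(x*) = conj (χ x)` for all `x ∈ B`. -/
theorem character_star_eq_conj_of_ne_zero {B : Type*} [CommRing B] [Algebra ℂ B]
    [StarRing B] [StarModule ℂ B] (χ : B →ₐ[ℂ] ℂ)
    (h : ∀ (n : ℕ) (a : Fin n → B), χ (1 + ∑ j, a j * star (a j)) ≠ 0) :
    ∀ x : B, χ (star x) = starRingEnd ℂ (χ x) := by
  intro x
  by_contra hx
  set c : ℂ := χ x with hc
  set d : ℂ := χ (star x) with hd
  have hne : c - starRingEnd ℂ d ≠ 0 := by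
    intro h0
    apply hx
    have hcd : c = starRingEnd ℂ d := by linear_combination h0
    have : starRingEnd ℂ c = d := by
      rw [hcd]; simp
    rw [← this]
  set α : ℂ := -2 / (c - starRingEnd ℂ d) with hα
  set β : ℂ := 1 - α * starRingEnd ℂ d with hβ
  have hαc : α * (c - starRingEnd ℂ d) = -2 := div_mul_cancel₀ (-2) hne
  set a : B := α • x + β • (1 : B) with ha
  have h1 : χ a = -1 := by
    rw [ha, map_add, map_smul, map_smul, map_one, ← hc, smul_eq_mul, smul_eq_mul, hβ]
    linear_combination hαc
  have h2 : χ (star a) = 1 := by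
    rw [ha, star_add, star_smul, star_smul, star_one, map_add, map_smul, map_smul,
      map_one, ← hd, smul_eq_mul, smul_eq_mul, hβ]
    simp only [star_sub, star_one, star_mul', Complex.star_def, Complex.conj_conj]
    ring
  apply h 1 (fun _ => a)
  rw [Fin.sum_univ_one, map_add, map_one, map_mul, h1, h2]
  ring
end

section
/- Let V be a compact smooth manifold and A = C^∞(V,ℂ). The map m : Spec(A) → V sending a prime ideal to the unique point at which all its elements vanish is continuous, where Spec(A) carries the Zariski topology and V its manifold topology. -/
open scoped Manifold

/-!
A prime `𝔮` that misses a function `f` has its point `m 𝔮` in `tsupport f`: otherwise a smooth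
bump `g` with `g (m 𝔮) = 1` supported where `f` vanishes gives `f * g = 0 ∈ 𝔮` with `g ∉ 𝔮`.
So for a bump `f` at `m 𝔭` supported in a closed neighbourhood `t ⊆ U`, the basic open set
`D(f)` contains `𝔭` and is mapped into `t`.
-/

/-- `ℂ` is a smooth ring as a manifold over `ℝ`. -/
instance : ContMDiffRing 𝓘(ℝ, ℂ) (⊤ : ℕ∞) ℂ :=
  { instNormedSpaceLieAddGroup with
    contMDiff_mul := by
      rw [contMDiff_iff]
      refine ⟨continuous_mul, fun x y => ?_⟩
      simp only [mfld_simps, chartAt_self_eq]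
      rw [contDiffOn_univ]
      exact contDiff_mul }

/-- Evaluation at a point, as a ring homomorphism on the algebra `C^∞(V, ℂ)`
of smooth complex valued functions. -/
noncomputable def smoothEvalRingHom {E H : Type*} [NormedAddCommGroup E] [NormedSpace ℝ E]
    [TopologicalSpace H] (I : ModelWithCorners ℝ E H) (V : Type*) [TopologicalSpace V]
    [ChartedSpace H V] (x : V) : ContMDiffMap I 𝓘(ℝ, ℂ) V ℂ (⊤ : ℕ∞) →+* ℂ where
  toFun f := f x
  map_one' := rfl
  map_mul' _ _ := rfl
  map_zero' := rfl
  map_add' _ _ := rfl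

open Set Filter Topology

section Bump

variable {E H : Type*} [NormedAddCommGroup E] [NormedSpace ℝ E] [FiniteDimensional ℝ E]
  [TopologicalSpace H] (I : ModelWithCorners ℝ E H)
  {V : Type*} [TopologicalSpace V] [ChartedSpace H V] [IsManifold I (⊤ : ℕ∞) V]
  [T2Space V] [SigmaCompactSpace V]

theorem exists_contMDiffMap_complex_eq_one_support_subset {x : V} {s : Set V} (hs : s ∈ 𝓝 x) :
    ∃ f : ContMDiffMap I 𝓘(ℝ, ℂ) V ℂ (⊤ : ℕ∞), f x = 1 ∧ Function.support f ⊆ s := by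
  obtain ⟨f, hf0, hf1, -⟩ := exists_contMDiffMap_zero_one_of_isClosed (n := (⊤ : ℕ∞)) I
    isOpen_interior.isClosed_compl isClosed_singleton
    (disjoint_singleton_right.2 fun hx => hx (mem_interior_iff_mem_nhds.2 hs))
  refine ⟨⟨Complex.ofRealCLM ∘ f, Complex.ofRealCLM.contMDiff.comp f.contMDiff⟩, ?_, ?_⟩
  · simp [hf1 rfl]
  · intro y hy
    by_contra hys
    exact hy (by simp [hf0 fun hy' => hys (interior_subset hy')])

end Bump

section Spectrum

variable {E H : Type*} [NormedAddCommGroup E] [NormedSpace ℝ E]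
  [TopologicalSpace H] {I : ModelWithCorners ℝ E H}
  {V : Type*} [TopologicalSpace V] [ChartedSpace H V]
  {𝔭 : PrimeSpectrum (ContMDiffMap I 𝓘(ℝ, ℂ) V ℂ (⊤ : ℕ∞))} {x : V}

theorem notMem_of_apply_ne_zero_of_le_ker
    (h𝔭 : 𝔭.asIdeal ≤ RingHom.ker (smoothEvalRingHom I V x))
    {f : ContMDiffMap I 𝓘(ℝ, ℂ) V ℂ (⊤ : ℕ∞)} (hf : f x ≠ 0) : f ∉ 𝔭.asIdeal :=
  fun hf𝔭 => hf (h𝔭 hf𝔭)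

theorem mem_tsupport_of_notMem_of_le_ker [FiniteDimensional ℝ E] [IsManifold I (⊤ : ℕ∞) V]
    [T2Space V] [SigmaCompactSpace V]
    (h𝔭 : 𝔭.asIdeal ≤ RingHom.ker (smoothEvalRingHom I V x))
    {f : ContMDiffMap I 𝓘(ℝ, ℂ) V ℂ (⊤ : ℕ∞)} (hf : f ∉ 𝔭.asIdeal) : x ∈ tsupport f := by
  by_contra hx
  obtain ⟨s, hs, hfs⟩ := (notMem_tsupport_iff_eventuallyEq.1 hx).exists_mem
  obtain ⟨g, hg1, hgs⟩ := exists_contMDiffMap_complex_eq_one_support_subset I hs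
  have hfg : f * g = 0 := by
    ext y
    by_cases hy : y ∈ s
    · simp [ContMDiffMap.coe_mul, hfs hy]
    · simp [ContMDiffMap.coe_mul, Function.notMem_support.1 fun h => hy (hgs h)]
  have hg : g ∉ 𝔭.asIdeal := notMem_of_apply_ne_zero_of_le_ker h𝔭 (by simp [hg1])
  exact (𝔭.isPrime.mem_or_mem (hfg ▸ 𝔭.asIdeal.zero_mem)).elim hf hg

end Spectrum

/-- For a compact smooth manifold `V` with `A = C^∞(V, ℂ)`, the map
`m : Spec(A) → V` sending a prime ideal to the unique point at which all of its elements
vanish is continuous, where `Spec(A)` carries the Zariski topology. -/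
theorem primeSpectrum_to_manifold_continuous
    {E H : Type*} [NormedAddCommGroup E] [NormedSpace ℝ E] [FiniteDimensional ℝ E]
    [TopologicalSpace H] (I : ModelWithCorners ℝ E H)
    (V : Type*) [TopologicalSpace V] [ChartedSpace H V] [IsManifold I (⊤ : ℕ∞) V]
    [CompactSpace V] [T2Space V]
    (m : PrimeSpectrum (ContMDiffMap I 𝓘(ℝ, ℂ) V ℂ (⊤ : ℕ∞)) → V)
    (hm : ∀ 𝔭 : PrimeSpectrum (ContMDiffMap I 𝓘(ℝ, ℂ) V ℂ (⊤ : ℕ∞)),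
      𝔭.asIdeal ≤ RingHom.ker (smoothEvalRingHom I V (m 𝔭))) :
    Continuous m := by
  refine continuous_iff_continuousAt.2 fun 𝔭 U hU => ?_
  obtain ⟨t, ht, htc, htU⟩ := exists_mem_nhds_isClosed_subset hU
  obtain ⟨f, hf1, hft⟩ := exists_contMDiffMap_complex_eq_one_support_subset I ht
  have h𝔭f : 𝔭 ∈ PrimeSpectrum.basicOpen f :=
    notMem_of_apply_ne_zero_of_le_ker (hm 𝔭) (by simp [hf1])
  refine mem_map.2 <| mem_of_superset ((PrimeSpectrum.basicOpen f).isOpen.mem_nhds h𝔭f) ?_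
  exact fun 𝔮 h𝔮 => htU (closure_minimal hft htc (mem_tsupport_of_notMem_of_le_ker (hm 𝔮) h𝔮))
end

section
/- Let V be a compact smooth manifold, A = C^∞(V,ℂ), f ∈ A, and 𝔮 a prime ideal of A with f ∉ 𝔮. Then the point m(𝔮) ∈ V (the unique point where all elements of 𝔮 vanish) lies in the support of f. -/
/-!
If `f` vanishes on a neighbourhood of `x`, a smooth bump `g` with `g x = 1` supported in that
neighbourhood satisfies `g * f = 0 ∈ 𝔮`. Since `g` does not vanish at `x`, it is not in `𝔮`, so
primality forces `f ∈ 𝔮`.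
-/

open scoped Manifold

section BumpFunctions

variable {E H : Type*} [NormedAddCommGroup E] [NormedSpace ℝ E] [FiniteDimensional ℝ E]
  [TopologicalSpace H] {I : ModelWithCorners ℝ E H}
  {V : Type*} [TopologicalSpace V] [ChartedSpace H V] [IsManifold I (⊤ : ℕ∞) V]
  [T2Space V] [SigmaCompactSpace V]

theorem exists_contMDiffMap_complex_eq_one_mul_eq_zero
    {f : ContMDiffMap I 𝓘(ℝ, ℂ) V ℂ (⊤ : ℕ∞)} {x : V} (hx : x ∉ closure {y | f y ≠ 0}) :
    ∃ g : ContMDiffMap I 𝓘(ℝ, ℂ) V ℂ (⊤ : ℕ∞), g x = 1 ∧ g * f = 0 := by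
  obtain ⟨g, hg_zero, hg_one, -⟩ := exists_contMDiffMap_zero_one_of_isClosed I (n := (⊤ : ℕ∞))
    isClosed_closure isClosed_singleton (Set.disjoint_singleton_right.2 hx)
  let gℂ := ContMDiffMap.compLeftRingHom I V Complex.ofRealHom
    Complex.ofRealCLM.contDiff.contMDiff g
  have hgℂ (y : V) : gℂ y = g y := rfl
  refine ⟨gℂ, by simp [hgℂ, hg_one rfl], ?_⟩
  ext y
  by_cases hy : f y = 0
  · simp [hy]
  · simp [hgℂ, hg_zero (subset_closure hy)]

theorem mem_of_notMem_closure_support {𝔮 : Ideal (ContMDiffMap I 𝓘(ℝ, ℂ) V ℂ (⊤ : ℕ∞))}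
    (h𝔮 : 𝔮.IsPrime) {x : V} (hx : 𝔮 ≤ RingHom.ker (smoothEvalRingHom I V x))
    {f : ContMDiffMap I 𝓘(ℝ, ℂ) V ℂ (⊤ : ℕ∞)} (hfx : x ∉ closure {y | f y ≠ 0}) : f ∈ 𝔮 := by
  obtain ⟨g, hgx, hgf⟩ := exists_contMDiffMap_complex_eq_one_mul_eq_zero hfx
  have hg : g ∉ 𝔮 := fun hg ↦ one_ne_zero (hgx.symm.trans (hx hg))
  exact (h𝔮.mem_or_mem (hgf ▸ 𝔮.zero_mem)).resolve_left hg

end BumpFunctions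

/-- Let `V` be a compact smooth manifold, `A = C^∞(V, ℂ)`, `f ∈ A`, and `𝔮` a prime ideal
of `A` with `f ∉ 𝔮`.  Then the point `m(𝔮) ∈ V` (the unique point at which all elements of
`𝔮` vanish) lies in the support of `f`, i.e. in the closure of `{x : f(x) ≠ 0}`. -/
theorem point_of_prime_mem_support
    {E H : Type*} [NormedAddCommGroup E] [NormedSpace ℝ E] [FiniteDimensional ℝ E]
    [TopologicalSpace H] (I : ModelWithCorners ℝ E H)
    (V : Type*) [TopologicalSpace V] [ChartedSpace H V] [IsManifold I (⊤ : ℕ∞) V]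
    [CompactSpace V] [T2Space V]
    (f : ContMDiffMap I 𝓘(ℝ, ℂ) V ℂ (⊤ : ℕ∞))
    (𝔮 : Ideal (ContMDiffMap I 𝓘(ℝ, ℂ) V ℂ (⊤ : ℕ∞))) (h𝔮 : 𝔮.IsPrime) (hf : f ∉ 𝔮)
    (x : V) (hx : 𝔮 ≤ RingHom.ker (smoothEvalRingHom I V x)) :
    x ∈ closure {y : V | f y ≠ 0} :=
  not_not.mp fun hfx ↦ hf (mem_of_notMem_closure_support h𝔮 hx hfx)
end
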